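/- Let g ≥ 2, α = 2π/(8g−4), and T_k(z) = (−1)^{k+1} (e^{i(1−k)α} z + i√(cos α)) / ((−i√(cos α)) z + e^{i(k−1)α}). Then T_{σ(k)} ∘ T_k is the identity on the unit circle, where σ(k) = 4g−k mod (8g−4) for odd k and σ(k) = 2−k mod (8g−4) for even k. -/

import Mathlib

open Complex Real

noncomputable def alphaG (g : ℕ) : ℝ := 2 * Real.pi / (8 * (g : ℝ) - 4)

noncomputable def Tgen (g : ℕ) (k : ℤ) (z : ℂ) : ℂ :=
  (-1 : ℂ) ^ (k + 1) *
    ((Complex.exp (Complex.I * (1 - (k : ℂ)) * (alphaG g : ℂ)) * z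
        + Complex.I * (Real.sqrt (Real.cos (alphaG g)) : ℂ)) /
     (-Complex.I * (Real.sqrt (Real.cos (alphaG g)) : ℂ) * z
        + Complex.exp (Complex.I * ((k : ℂ) - 1) * (alphaG g : ℂ))))

def sigmaSide (g k : ℤ) : ℤ :=
  if Odd k then (4 * g - k) % (8 * g - 4) else (2 - k) % (8 * g - 4)

/-!
Write `A = e^{i(1-k)α}`, `s = √(cos α)` and `ε = (-1)^(k+1)`: `T_k` is the Möbius map of the matrix
`[[εA, εis], [-is, A⁻¹]]`. Since `(4g-2)α = π`, shifting `k` by `4g - 2` negates `A` and keeps `ε`,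
while `k ↦ 2 - k` swaps `A` and `A⁻¹` and keeps `ε`; note `4g - k = (2 - k) + (4g - 2)`, and the
reduction mod `8g - 4` is harmless by periodicity. In either parity case `T_{σ(k)}` is therefore the
Möbius map of `[[-A⁻¹, εis], [-is, -εA]]`, the negated adjugate of the matrix of `T_k`, so it inverts
`T_k` wherever the denominator `-isz + A⁻¹` of `T_k` does not vanish. On the unit circle it cannot,
because `s < 1 = |A⁻¹|`; and the determinant `ε(1 - s²)` is nonzero for the same reason.
-/

section Moebius

variable {K : Type*} [Field K]

def moebius (a b c d z : K) : K := (a * z + b) / (c * z + d)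

theorem moebius_neg_adjugate_moebius {a b c d z : K} (hdet : a * d - b * c ≠ 0)
    (hz : c * z + d ≠ 0) : moebius (-d) b c (-a) (moebius a b c d z) = z := by
  unfold moebius
  have hnum : -d * ((a * z + b) / (c * z + d)) + b = -(a * d - b * c) * z / (c * z + d) := by
    rw [mul_div_assoc', div_add' _ _ _ hz]; ring
  have hden : c * ((a * z + b) / (c * z + d)) + -a = -(a * d - b * c) / (c * z + d) := by
    rw [mul_div_assoc', div_add' _ _ _ hz]; ring
  rw [hnum, hden, div_div_div_cancel_right₀ hz, mul_div_cancel_left₀ z (neg_ne_zero.mpr hdet)]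

end Moebius

theorem mul_add_ne_zero_of_norm_lt {R : Type*} [SeminormedRing R] {c d z : R} (hz : ‖z‖ ≤ 1)
    (hcd : ‖c‖ < ‖d‖) : c * z + d ≠ 0 := by
  intro h
  have : ‖d‖ ≤ ‖c‖ := calc
    ‖d‖ = ‖c * z‖ := by rw [eq_neg_of_add_eq_zero_right h, norm_neg]
    _ ≤ ‖c‖ * ‖z‖ := norm_mul_le c z
    _ ≤ ‖c‖ := mul_le_of_le_one_right (norm_nonneg c) hz
  exact this.not_gt hcd

open Function

theorem eight_mul_sub_four_ne_zero (g : ℕ) : 8 * (g : ℝ) - 4 ≠ 0 := by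
  intro h
  have : ((2 * g : ℕ) : ℝ) = 1 := by push_cast; linarith
  norm_cast at this
  omega

theorem four_mul_sub_two_mul_alphaG (g : ℕ) : (4 * (g : ℝ) - 2) * alphaG g = π := by
  have := eight_mul_sub_four_ne_zero g
  rw [alphaG, mul_div_assoc', div_eq_iff this]
  ring

theorem cos_alphaG_lt_one (g : ℕ) : Real.cos (alphaG g) < 1 := by
  have h4 : 4 ≤ |8 * (g : ℝ) - 4| := by
    rcases Nat.eq_zero_or_pos g with rfl | hg
    · norm_num
    · have : (1 : ℝ) ≤ g := by exact_mod_cast hg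
      rw [abs_of_nonneg (by linarith)]
      linarith
  have hα : |alphaG g| < 2 * π := by
    rw [alphaG, abs_div, abs_of_pos (by positivity : 0 < 2 * π), div_lt_iff₀ (by linarith)]
    nlinarith [pi_pos]
  have hα0 : alphaG g ≠ 0 := div_ne_zero (by positivity) (eight_mul_sub_four_ne_zero g)
  refine (cos_le_one _).lt_of_ne fun h => hα0 ?_
  exact (cos_eq_one_iff_of_lt_of_lt (abs_lt.mp hα).1 (abs_lt.mp hα).2).mp h

noncomputable def rotAlpha (g : ℕ) (t : ℂ) : ℂ := Complex.exp (I * t * alphaG g)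

theorem rotAlpha_add (g : ℕ) (t u : ℂ) : rotAlpha g (t + u) = rotAlpha g t * rotAlpha g u := by
  rw [rotAlpha, rotAlpha, rotAlpha, ← Complex.exp_add]
  ring_nf

theorem rotAlpha_neg_mul_self (g : ℕ) (t : ℂ) : rotAlpha g (-t) * rotAlpha g t = 1 := by
  rw [← rotAlpha_add, neg_add_cancel, rotAlpha, mul_zero, zero_mul, Complex.exp_zero]

theorem norm_rotAlpha_ofReal (g : ℕ) (t : ℝ) : ‖rotAlpha g t‖ = 1 := by
  rw [rotAlpha, show I * t * alphaG g = ((t * alphaG g : ℝ) : ℂ) * I by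
    push_cast; ring]
  exact Complex.norm_exp_ofReal_mul_I _

theorem rotAlpha_antiperiodic (g : ℕ) : Antiperiodic (rotAlpha g) (4 * g - 2) := by
  intro t
  have hπ : rotAlpha g (4 * g - 2) = -1 := by
    rw [rotAlpha, show I * (4 * g - 2) * alphaG g = ((4 * g - 2) * alphaG g : ℝ) * I
      by push_cast; ring, four_mul_sub_two_mul_alphaG, Complex.exp_pi_mul_I]
  rw [rotAlpha_add, hπ, mul_neg_one]

theorem rotAlpha_periodic (g : ℕ) : Periodic (rotAlpha g) (8 * g - 4) := by
  have := (rotAlpha_antiperiodic g).periodic_two_mul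
  rwa [show (2 : ℂ) * (4 * g - 2) = 8 * g - 4 by ring] at this

noncomputable def sqrtCosAlpha (g : ℕ) : ℝ := √(Real.cos (alphaG g))

theorem sqrtCosAlpha_lt_one (g : ℕ) : sqrtCosAlpha g < 1 := by
  rw [sqrtCosAlpha, Real.sqrt_lt' one_pos, one_pow]
  exact cos_alphaG_lt_one g

theorem Tgen_eq_moebius (g : ℕ) (k : ℤ) :
    Tgen g k = moebius ((-1) ^ (k + 1) * rotAlpha g (1 - k)) ((-1) ^ (k + 1) * (I * sqrtCosAlpha g))
      (-I * sqrtCosAlpha g) (rotAlpha g (k - 1)) := by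
  funext z
  simp only [Tgen, moebius, rotAlpha, sqrtCosAlpha]
  ring

theorem Tgen_periodic (g : ℕ) : Periodic (Tgen g) (8 * g - 4) := by
  intro k
  have hsign : (-1 : ℂ) ^ (k + (8 * g - 4) + 1) = (-1) ^ (k + 1) := by
    rw [show k + (8 * g - 4) + 1 = k + 1 + 2 * (4 * g - 2) by ring,
      zpow_add₀ (by norm_num), Even.neg_one_zpow (even_two_mul _), mul_one]
  rw [Tgen_eq_moebius, Tgen_eq_moebius, hsign]
  push_cast
  rw [show (1 : ℂ) - (k + (8 * g - 4)) = 1 - k - (8 * g - 4) by ring,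
    (rotAlpha_periodic g).sub_eq, show (k : ℂ) + (8 * g - 4) - 1 = k - 1 + (8 * g - 4) by ring,
    rotAlpha_periodic g]

theorem Tgen_emod (g : ℕ) (k : ℤ) : Tgen g (k % (8 * g - 4)) = Tgen g k := by
  rw [Int.emod_def, mul_comm]
  exact (Tgen_periodic g).sub_int_mul_eq _

theorem Tgen_sigmaSide (g : ℕ) (k : ℤ) :
    Tgen g (sigmaSide g k) = moebius (-rotAlpha g (k - 1)) ((-1) ^ (k + 1) * (I * sqrtCosAlpha g))
      (-I * sqrtCosAlpha g) (-((-1) ^ (k + 1) * rotAlpha g (1 - k))) := by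
  unfold sigmaSide
  split_ifs with hk
  · obtain ⟨m, rfl⟩ := hk
    have hsign : (-1 : ℂ) ^ (4 * g - (2 * m + 1) + 1) = (-1) ^ (2 * m + 1 + 1) := by
      rw [Even.neg_one_zpow ⟨2 * g - m, by ring⟩, Even.neg_one_zpow ⟨m + 1, by ring⟩]
    rw [Tgen_emod, Tgen_eq_moebius, hsign]
    push_cast
    rw [show (1 : ℂ) - (4 * g - (2 * m + 1)) = 2 * m + 1 - 1 - (4 * g - 2) by ring,
      (rotAlpha_antiperiodic g).sub_eq,
      show (4 * g - (2 * m + 1) : ℂ) - 1 = 1 - (2 * m + 1) + (4 * g - 2) by ring,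
      rotAlpha_antiperiodic g, Even.neg_one_zpow ⟨m + 1, by ring⟩]
    simp only [one_mul]
  · obtain ⟨m, rfl⟩ := Int.not_odd_iff_even.mp hk
    have hsign : (-1 : ℂ) ^ (2 - (m + m) + 1) = (-1) ^ (m + m + 1) := by
      rw [Odd.neg_one_zpow ⟨1 - m, by ring⟩, Odd.neg_one_zpow ⟨m, by ring⟩]
    rw [Tgen_emod, Tgen_eq_moebius, hsign, Odd.neg_one_zpow ⟨m, by ring⟩]
    push_cast
    rw [show (1 : ℂ) - (2 - (m + m)) = m + m - 1 by ring,
      show (2 - (m + m) : ℂ) - 1 = 1 - (m + m) by ring]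
    simp only [neg_one_mul, neg_neg]

theorem Tgen_sigma_inverse_general (g : ℕ) (k : ℤ) (z : ℂ) (hz : ‖z‖ = 1) :
    Tgen g (sigmaSide (g : ℤ) k) (Tgen g k z) = z := by
  have hs1 := sqrtCosAlpha_lt_one g
  have hs0 : 0 ≤ sqrtCosAlpha g := Real.sqrt_nonneg _
  rw [Tgen_sigmaSide, Tgen_eq_moebius]
  apply moebius_neg_adjugate_moebius
  · have hdet : (-1) ^ (k + 1) * rotAlpha g (1 - k) * rotAlpha g (k - 1)
        - (-1) ^ (k + 1) * (I * sqrtCosAlpha g) * (-I * sqrtCosAlpha g)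
        = (-1) ^ (k + 1) * (1 - (sqrtCosAlpha g ^ 2 : ℝ)) := by
      have hrot : rotAlpha g (1 - k) * rotAlpha g (k - 1) = 1 := by
        rw [← neg_sub, rotAlpha_neg_mul_self]
      push_cast
      linear_combination (-1 : ℂ) ^ (k + 1) * hrot + (-1) ^ (k + 1) * (sqrtCosAlpha g : ℂ) ^ 2 * I_sq
    rw [hdet]
    refine mul_ne_zero (zpow_ne_zero _ (by norm_num)) ?_
    exact_mod_cast (by nlinarith : (1 : ℝ) - sqrtCosAlpha g ^ 2 ≠ 0)
  · refine mul_add_ne_zero_of_norm_lt hz.le ?_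
    have hrot : ‖rotAlpha g (k - 1)‖ = 1 := by
      simpa using norm_rotAlpha_ofReal g ((k : ℝ) - 1)
    rwa [hrot, norm_mul, norm_neg, norm_I, one_mul, norm_real, Real.norm_of_nonneg hs0]

theorem Tgen_sigma_inverse (g : ℕ) (hg : 2 ≤ g) (k : ℤ) (z : ℂ) (hz : ‖z‖ = 1) :
    Tgen g (sigmaSide (g : ℤ) k) (Tgen g k z) = z :=
  Tgen_sigma_inverse_general g k z hz
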